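/- arXiv:math/9412215 — 2 statements merged into one kernel-verified Lean document; each statement's English description precedes it below -/
import Mathlib

section
/- A φ-function F is dilatory if and only if its lower Matuszewska–Orlicz index satisfies p_m(F) > 0. -/
open MeasureTheory Set Filter Topology
open scoped ENNReal NNReal

noncomputable section

/-- A φ-function on `[0,∞)`: strictly increasing, continuous, `F 0 = 0`, `F t → ∞`. -/
def IsPhiFun (F : ℝ → ℝ) : Prop :=
  F 0 = 0 ∧ StrictMonoOn F (Ici 0) ∧ ContinuousOn F (Ici 0) ∧ Tendsto F atTop atTop

/-- The (generalized) inverse of a φ-function, defined on `[0,∞)`. -/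
def phiInv (F : ℝ → ℝ) : ℝ → ℝ := Function.invFunOn F (Ici 0)

/-- `F̃ t = 1 / F (1 / t)` for `t > 0`, and `F̃ 0 = 0`. -/
def phiTilde (F : ℝ → ℝ) : ℝ → ℝ := fun t => if 0 < t then 1 / F (1 / t) else 0

/-- A φ-function is dilatory if `F (c₁ t) ≥ c₂ F t` for some `c₁, c₂ ∈ (1,∞)`. -/
def Dilatory (F : ℝ → ℝ) : Prop :=
  ∃ c₁ c₂ : ℝ, 1 < c₁ ∧ 1 < c₂ ∧ ∀ t : ℝ, 0 ≤ t → c₂ * F t ≤ F (c₁ * t)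

/-- `F` satisfies the Δ₂-condition if `F⁻¹` is dilatory. -/
def Delta2 (F : ℝ → ℝ) : Prop := Dilatory (phiInv F)

/-- Lower Matuszewska–Orlicz index `p_m(F)`, valued in `[0,∞]`. -/
def matLower (F : ℝ → ℝ) : ℝ≥0∞ :=
  sSup (ENNReal.ofReal ''
    {p : ℝ | ∃ c : ℝ, 0 < c ∧ ∀ t : ℝ, 0 ≤ t → ∀ a : ℝ, 1 < a → c * a ^ p * F t ≤ F (a * t)})

/-- Upper Matuszewska–Orlicz index `q_m(F)`, valued in `[0,∞]`. -/
def matUpper (F : ℝ → ℝ) : ℝ≥0∞ :=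
  sInf (ENNReal.ofReal ''
    {q : ℝ | ∃ c : ℝ, 0 < c ∧ ∀ t : ℝ, 0 ≤ t → ∀ a : ℝ, 1 < a → F (a * t) ≤ c * a ^ q * F t})

/-- Non-increasing rearrangement of a measurable function on `[0,∞)`:
`f* x = sup { t ≥ 0 : λ({|f| ≥ t}) ≥ x }`. -/
def decRearr (f : ℝ → ℂ) (x : ℝ) : ℝ :=
  sSup {t : ℝ | 0 ≤ t ∧ ENNReal.ofReal x ≤ volume {y : ℝ | 0 ≤ y ∧ t ≤ ‖f y‖}}

/-- Luxemburg functional `‖f‖_G = inf { c > 0 : ∫₀^∞ G (|f x| / c) dx ≤ 1 }`. -/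
def luxNorm (G : ℝ → ℝ) (f : ℝ → ℝ) : ℝ≥0∞ :=
  sInf (ENNReal.ofReal ''
    {c : ℝ | 0 < c ∧ ∫⁻ x in Ioi (0:ℝ), ENNReal.ofReal (G (|f x| / c)) ≤ 1})

/-- Luxemburg functional of a complex-valued function. -/
def luxNormC (G : ℝ → ℝ) (f : ℝ → ℂ) : ℝ≥0∞ :=
  luxNorm G (fun x => ‖f x‖)

/-- Orlicz–Lorentz functional `‖f‖_{F,G} = ‖f* ∘ F̃ ∘ G̃⁻¹‖_G`. -/
def olNorm (F G : ℝ → ℝ) (f : ℝ → ℂ) : ℝ≥0∞ :=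
  luxNorm G (fun x => decRearr f (phiTilde F (phiInv (phiTilde G) x)))

/-- Lower Boyd index of a rearrangement-invariant functional. -/
def boydLower (N : (ℝ → ℂ) → ℝ≥0∞) : ℝ≥0∞ :=
  sSup (ENNReal.ofReal ''
    {p : ℝ | ∃ c : ℝ, 0 < c ∧ ∀ f : ℝ → ℂ, ∀ a : ℝ, 0 < a → a < 1 →
      N (fun x => f (a * x)) ≤ ENNReal.ofReal (c * a ^ (-1 / p)) * N f})

/-- Upper Boyd index of a rearrangement-invariant functional. -/
def boydUpper (N : (ℝ → ℂ) → ℝ≥0∞) : ℝ≥0∞ :=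
  sInf (ENNReal.ofReal ''
    {q : ℝ | ∃ c : ℝ, 0 < c ∧ ∀ f : ℝ → ℂ, ∀ a : ℝ, 1 < a →
      N (fun x => f (a * x)) ≤ ENNReal.ofReal (c * a ^ (-1 / q)) * N f})

/-- Lower Zippin index of a rearrangement-invariant functional. -/
def zippinLower (N : (ℝ → ℂ) → ℝ≥0∞) : ℝ≥0∞ :=
  sSup (ENNReal.ofReal ''
    {p : ℝ | ∃ c : ℝ, 0 < c ∧ ∀ A : Set ℝ, MeasurableSet A → ∀ a : ℝ, 0 < a → a < 1 →
      N (fun x => A.indicator (fun _ => (1:ℂ)) (a * x)) ≤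
        ENNReal.ofReal (c * a ^ (-1 / p)) * N (A.indicator fun _ => (1:ℂ))})

/-- Upper Zippin index of a rearrangement-invariant functional. -/
def zippinUpper (N : (ℝ → ℂ) → ℝ≥0∞) : ℝ≥0∞ :=
  sInf (ENNReal.ofReal ''
    {q : ℝ | ∃ c : ℝ, 0 < c ∧ ∀ A : Set ℝ, MeasurableSet A → ∀ a : ℝ, 1 < a →
      N (fun x => A.indicator (fun _ => (1:ℂ)) (a * x)) ≤
        ENNReal.ofReal (c * a ^ (-1 / q)) * N (A.indicator fun _ => (1:ℂ))})

/-- Two φ-functions are equivalent: `F (c⁻¹ t) ≤ G t ≤ F (c t)`. -/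
def PhiEquiv (F G : ℝ → ℝ) : Prop :=
  ∃ c : ℝ, 0 < c ∧ ∀ t : ℝ, 0 ≤ t → F (c⁻¹ * t) ≤ G t ∧ G t ≤ F (c * t)

/-- `F ≺ G` : `G ∘ F⁻¹` is equivalent to a convex φ-function
(`F` is equivalently less convex than `G`). -/
def PhiPrec (F G : ℝ → ℝ) : Prop :=
  ∃ C : ℝ → ℝ, IsPhiFun C ∧ ConvexOn ℝ (Ici 0) C ∧ PhiEquiv (fun t => G (phiInv F t)) C

/-- An N-function: equivalent to a φ-function `H₀` with `H₀ t / t` strictly increasing,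
tending to `∞` at `∞` and to `0` at `0⁺`. -/
def IsNFun (H : ℝ → ℝ) : Prop :=
  IsPhiFun H ∧ ∃ H₀ : ℝ → ℝ, IsPhiFun H₀ ∧ PhiEquiv H H₀ ∧
    StrictMonoOn (fun t => H₀ t / t) (Ioi 0) ∧
    Tendsto (fun t => H₀ t / t) atTop atTop ∧
    Tendsto (fun t => H₀ t / t) (nhdsWithin 0 (Ioi 0)) (nhds 0)

/-- `Hs` is complementary to `H`: `c⁻¹ t ≤ H⁻¹ t · Hs⁻¹ t ≤ c t`. -/
def Complementary (H Hs : ℝ → ℝ) : Prop :=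
  ∃ c : ℝ, 0 < c ∧ ∀ t : ℝ, 0 ≤ t →
    c⁻¹ * t ≤ phiInv H t * phiInv Hs t ∧ phiInv H t * phiInv Hs t ≤ c * t

/-- Condition (J): `‖ x ↦ 1 / (H̃*)⁻¹ x ‖_{H*} < ∞` for a complementary function `H*`. -/
def CondJ (H : ℝ → ℝ) : Prop :=
  ∃ Hs : ℝ → ℝ, IsPhiFun Hs ∧ Complementary H Hs ∧
    luxNorm Hs (fun x => 1 / phiInv (phiTilde Hs) x) < ⊤

/-- A functional on measurable functions is `p`-convex. -/
def PConvex (N : (ℝ → ℂ) → ℝ≥0∞) (p : ℝ) : Prop :=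
  ∃ C : ℝ, 0 < C ∧ ∀ n : ℕ, ∀ f : Fin n → ℝ → ℂ, (∀ i, N (f i) < ⊤) →
    N (fun x => (((∑ i, ‖f i x‖ ^ p) ^ (1/p) : ℝ) : ℂ)) ≤
      ENNReal.ofReal C * (∑ i, N (f i) ^ p) ^ (1/p)

/-- A functional on measurable functions is `q`-concave. -/
def QConcave (N : (ℝ → ℂ) → ℝ≥0∞) (q : ℝ) : Prop :=
  ∃ C : ℝ, 0 < C ∧ ∀ n : ℕ, ∀ f : Fin n → ℝ → ℂ, (∀ i, N (f i) < ⊤) →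
    ENNReal.ofReal C⁻¹ * (∑ i, N (f i) ^ q) ^ (1/q) ≤
      N (fun x => (((∑ i, ‖f i x‖ ^ q) ^ (1/q) : ℝ) : ℂ))

/-!
Iterating `c₂ F t ≤ F (c₁ t)` gives `c₂ⁿ F t ≤ F (c₁ⁿ t)`; placing `a > 1` between consecutive
powers `c₁ⁿ ≤ a < c₁ⁿ⁺¹` and using monotonicity yields `c₂⁻¹ aᵖ F t ≤ F (a t)` with
`p = log_{c₁} c₂ > 0`. Conversely, a bound `c aᵖ F t ≤ F (a t)` with `p > 0` makes `F` dilatory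
with `c₂ = 2`, for any `a > 1` large enough that `c aᵖ ≥ 2`.
-/

def IsMatLowerExponent (F : ℝ → ℝ) (p : ℝ) : Prop :=
  ∃ c : ℝ, 0 < c ∧ ∀ t : ℝ, 0 ≤ t → ∀ a : ℝ, 1 < a → c * a ^ p * F t ≤ F (a * t)

theorem matLower_pos_iff {F : ℝ → ℝ} :
    0 < matLower F ↔ ∃ p, 0 < p ∧ IsMatLowerExponent F p := by
  constructor
  · intro h
    obtain ⟨_, ⟨p, hp, rfl⟩, hpos⟩ := lt_sSup_iff.1 h
    exact ⟨p, ENNReal.ofReal_pos.1 hpos, hp⟩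
  · rintro ⟨p, hp, hpF⟩
    exact (ENNReal.ofReal_pos.2 hp).trans_le (le_sSup ⟨p, hpF, rfl⟩)

theorem IsPhiFun.nonneg {F : ℝ → ℝ} (hF : IsPhiFun F) {t : ℝ} (ht : 0 ≤ t) : 0 ≤ F t :=
  hF.1 ▸ hF.2.1.monotoneOn self_mem_Ici ht ht

theorem le_apply_pow_mul_of_le_apply_mul {F : ℝ → ℝ} {c₁ c₂ : ℝ} (hc₁ : 0 ≤ c₁) (hc₂ : 0 ≤ c₂)
    (hdil : ∀ t, 0 ≤ t → c₂ * F t ≤ F (c₁ * t)) (n : ℕ) {t : ℝ} (ht : 0 ≤ t) :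
    c₂ ^ n * F t ≤ F (c₁ ^ n * t) := by
  induction n with
  | zero => simp
  | succ n ih =>
    calc c₂ ^ (n + 1) * F t = c₂ * (c₂ ^ n * F t) := by ring
      _ ≤ c₂ * F (c₁ ^ n * t) := mul_le_mul_of_nonneg_left ih hc₂
      _ ≤ F (c₁ * (c₁ ^ n * t)) := hdil _ (by positivity)
      _ = F (c₁ ^ (n + 1) * t) := by ring_nf

theorem isMatLowerExponent_logb {F : ℝ → ℝ} (hmono : MonotoneOn F (Ici 0))
    (hnonneg : ∀ t, 0 ≤ t → 0 ≤ F t) {c₁ c₂ : ℝ} (hc₁ : 1 < c₁) (hc₂ : 1 < c₂)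
    (hdil : ∀ t, 0 ≤ t → c₂ * F t ≤ F (c₁ * t)) :
    IsMatLowerExponent F (Real.logb c₁ c₂) := by
  set p := Real.logb c₁ c₂
  have hc₁p : c₁ ^ p = c₂ := Real.rpow_logb (by linarith) hc₁.ne' (by linarith)
  refine ⟨c₂⁻¹, by positivity, fun t ht a ha => ?_⟩
  obtain ⟨n, hn_le, hlt⟩ := exists_nat_pow_near ha.le hc₁
  have hap : a ^ p ≤ c₂ ^ (n + 1) :=
    calc a ^ p ≤ (c₁ ^ (n + 1)) ^ p :=
          Real.rpow_le_rpow (by linarith) hlt.le (Real.logb_pos hc₁ hc₂).le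
      _ = c₂ ^ (n + 1) := by rw [← Real.rpow_pow_comm (by linarith), hc₁p]
  calc c₂⁻¹ * a ^ p * F t ≤ c₂⁻¹ * c₂ ^ (n + 1) * F t := by gcongr; exact hnonneg t ht
    _ = c₂ ^ n * F t := by field_simp; ring
    _ ≤ F (c₁ ^ n * t) := le_apply_pow_mul_of_le_apply_mul (by linarith) (by linarith) hdil n ht
    _ ≤ F (a * t) := hmono (by simp only [mem_Ici]; positivity)
          (mul_nonneg (by linarith) ht) (by gcongr)

theorem IsMatLowerExponent.dilatory {F : ℝ → ℝ} {p : ℝ} (hpF : IsMatLowerExponent F p)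
    (hp : 0 < p) (hnonneg : ∀ t, 0 ≤ t → 0 ≤ F t) : Dilatory F := by
  obtain ⟨c, hc, hbound⟩ := hpF
  obtain ⟨a, ha2, ha1⟩ := (((tendsto_rpow_atTop hp).const_mul_atTop hc).eventually_ge_atTop 2
    |>.and (eventually_gt_atTop 1)).exists
  refine ⟨a, 2, ha1, one_lt_two, fun t ht => ?_⟩
  calc 2 * F t ≤ c * a ^ p * F t := by gcongr; exact hnonneg t ht
    _ ≤ F (a * t) := hbound t ht a ha1

/-- A φ-function `F` is dilatory iff `p_m(F) > 0`. -/
theorem dilatory_iff_matLower_pos (F : ℝ → ℝ) (hF : IsPhiFun F) :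
    Dilatory F ↔ 0 < matLower F := by
  rw [matLower_pos_iff]
  constructor
  · rintro ⟨c₁, c₂, hc₁, hc₂, hdil⟩
    exact ⟨_, Real.logb_pos hc₁ hc₂,
      isMatLowerExponent_logb hF.2.1.monotoneOn (fun _ => hF.nonneg) hc₁ hc₂ hdil⟩
  · rintro ⟨p, hp, hpF⟩
    exact hpF.dilatory hp fun _ => hF.nonneg

end
end

section
/- A φ-function F satisfies the Δ₂-condition if and only if its upper Matuszewska–Orlicz index satisfies q_m(F) < ∞. -/
open MeasureTheory Set Filter Topology
open scoped ENNReal NNReal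

noncomputable section

/-!
Through the inverse, "`F⁻¹` is dilatory" is the doubling condition `F (c₂ s) ≤ c₁ F s` for some
`c₁, c₂ > 1`. Iterating it `n = ⌈log_{c₂} a⌉` times gives `F (a t) ≤ c₁ ^ n F t ≤ c₁ a ^ q F t`
with `q = log_{c₂} c₁`, so `q_m(F) ≤ q`; conversely any finite index bound at `a = 2` is a
doubling condition.
-/

namespace IsPhiFun

variable {F : ℝ → ℝ}

theorem nonneg_s1 (hF : IsPhiFun F) {s : ℝ} (hs : 0 ≤ s) : 0 ≤ F s := by
  obtain ⟨h0, hmono, -, -⟩ := hF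
  simpa [h0] using hmono.monotoneOn self_mem_Ici hs hs

theorem surjOn (hF : IsPhiFun F) : SurjOn F (Ici 0) (Ici 0) := by
  intro y (hy : 0 ≤ y)
  obtain ⟨h0, -, hcont, htop⟩ := hF
  obtain ⟨b, hFb, hb⟩ := ((htop.eventually_ge_atTop y).and (eventually_ge_atTop 0)).exists
  obtain ⟨x, hx, rfl⟩ := intermediate_value_Icc hb (hcont.mono Icc_subset_Ici_self)
    (show y ∈ Icc (F 0) (F b) from ⟨h0.symm ▸ hy, hFb⟩)
  exact ⟨x, hx.1, rfl⟩

theorem phiInv_apply (hF : IsPhiFun F) {x : ℝ} (hx : 0 ≤ x) : phiInv F (F x) = x :=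
  hF.2.1.injOn.leftInvOn_invFunOn hx

theorem apply_phiInv (hF : IsPhiFun F) {y : ℝ} (hy : 0 ≤ y) : F (phiInv F y) = y :=
  Function.invFunOn_eq (hF.surjOn hy)

theorem phiInv_nonneg (hF : IsPhiFun F) {y : ℝ} (hy : 0 ≤ y) : 0 ≤ phiInv F y :=
  Function.invFunOn_mem (hF.surjOn hy)

theorem delta2_iff_exists_doubling (hF : IsPhiFun F) :
    Delta2 F ↔ ∃ c₁ c₂ : ℝ, 1 < c₁ ∧ 1 < c₂ ∧ ∀ s : ℝ, 0 ≤ s → F (c₂ * s) ≤ c₁ * F s := by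
  refine exists₂_congr fun c₁ c₂ => and_congr_right fun hc₁ => and_congr_right fun hc₂ => ?_
  have hmono := hF.2.1
  constructor
  · intro h s hs
    have hc₁Fs : 0 ≤ c₁ * F s := mul_nonneg (by linarith) (hF.nonneg_s1 hs)
    have := hmono.monotoneOn (mul_nonneg (by linarith) hs) (hF.phiInv_nonneg hc₁Fs)
      (hF.phiInv_apply hs ▸ h (F s) (hF.nonneg_s1 hs))
    rwa [hF.apply_phiInv hc₁Fs] at this
  · intro h t ht
    have hc₁t : 0 ≤ c₁ * t := mul_nonneg (by linarith) ht
    have := h (phiInv F t) (hF.phiInv_nonneg ht)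
    rw [hF.apply_phiInv ht, ← hF.apply_phiInv hc₁t] at this
    exact (hmono.le_iff_le (mul_nonneg (by linarith) (hF.phiInv_nonneg ht))
      (hF.phiInv_nonneg hc₁t)).mp this

end IsPhiFun

theorem sInf_ofReal_image_lt_top_iff {S : Set ℝ} :
    sInf (ENNReal.ofReal '' S) < ⊤ ↔ S.Nonempty := by
  simp [lt_top_iff_ne_top, sInf_eq_top, Set.Nonempty]

theorem le_pow_mul_of_doubling {F : ℝ → ℝ} {c₁ c₂ : ℝ} (hc₁ : 0 ≤ c₁) (hc₂ : 0 ≤ c₂)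
    (h : ∀ s : ℝ, 0 ≤ s → F (c₂ * s) ≤ c₁ * F s) (n : ℕ) {s : ℝ} (hs : 0 ≤ s) :
    F (c₂ ^ n * s) ≤ c₁ ^ n * F s := by
  induction n generalizing s with
  | zero => simp
  | succ n ih =>
    calc F (c₂ ^ (n + 1) * s) = F (c₂ ^ n * (c₂ * s)) := by ring_nf
      _ ≤ c₁ ^ n * F (c₂ * s) := ih (mul_nonneg hc₂ hs)
      _ ≤ c₁ ^ n * (c₁ * F s) := mul_le_mul_of_nonneg_left (h s hs) (pow_nonneg hc₁ n)
      _ = c₁ ^ (n + 1) * F s := by ring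

theorem rpow_logb_comm {a b c : ℝ} (ha : 0 < a) (hb₀ : 0 < b) (hb₁ : b ≠ 1) (hc : 0 < c) :
    a ^ Real.logb b c = c ^ Real.logb b a := by
  conv_lhs => rw [← Real.rpow_logb hb₀ hb₁ ha]
  conv_rhs => rw [← Real.rpow_logb hb₀ hb₁ hc]
  rw [← Real.rpow_mul hb₀.le, ← Real.rpow_mul hb₀.le, mul_comm]

theorem exists_le_pow_and_pow_le_mul_rpow_logb {a c₁ c₂ : ℝ} (ha : 1 ≤ a) (hc₁ : 1 ≤ c₁)
    (hc₂ : 1 < c₂) : ∃ n : ℕ, a ≤ c₂ ^ n ∧ c₁ ^ n ≤ c₁ * a ^ Real.logb c₂ c₁ := by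
  have hlog : 0 ≤ Real.logb c₂ a := Real.logb_nonneg hc₂ ha
  refine ⟨⌈Real.logb c₂ a⌉₊, ?_, ?_⟩
  · rw [← Real.rpow_natCast, ← Real.logb_le_iff_le_rpow hc₂ (by linarith)]
    exact Nat.le_ceil _
  · rw [rpow_logb_comm (by linarith) (by linarith) hc₂.ne' (by linarith), ← Real.rpow_natCast,
      ← Real.rpow_one_add' (by linarith) (by positivity)]
    exact Real.rpow_le_rpow_of_exponent_le hc₁ (by linarith [Nat.ceil_lt_add_one hlog])

theorem IsPhiFun.le_mul_rpow_logb_mul_of_doubling {F : ℝ → ℝ} (hF : IsPhiFun F) {c₁ c₂ : ℝ}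
    (hc₁ : 1 ≤ c₁) (hc₂ : 1 < c₂) (h : ∀ s : ℝ, 0 ≤ s → F (c₂ * s) ≤ c₁ * F s)
    {t : ℝ} (ht : 0 ≤ t) {a : ℝ} (ha : 1 < a) :
    F (a * t) ≤ c₁ * a ^ Real.logb c₂ c₁ * F t := by
  obtain ⟨n, han, hcn⟩ := exists_le_pow_and_pow_le_mul_rpow_logb ha.le hc₁ hc₂
  calc F (a * t) ≤ F (c₂ ^ n * t) :=
        hF.2.1.monotoneOn (mul_nonneg (by linarith) ht) (mul_nonneg (by positivity) ht)
          (mul_le_mul_of_nonneg_right han ht)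
    _ ≤ c₁ ^ n * F t := le_pow_mul_of_doubling (by linarith) (by linarith) h n ht
    _ ≤ c₁ * a ^ Real.logb c₂ c₁ * F t := mul_le_mul_of_nonneg_right hcn (hF.nonneg_s1 ht)

/-- A φ-function `F` satisfies the Δ₂-condition iff `q_m(F) < ∞`. -/
theorem delta2_iff_matUpper_lt_top (F : ℝ → ℝ) (hF : IsPhiFun F) :
    Delta2 F ↔ matUpper F < ⊤ := by
  rw [hF.delta2_iff_exists_doubling, matUpper, sInf_ofReal_image_lt_top_iff]
  constructor
  · rintro ⟨c₁, c₂, hc₁, hc₂, h⟩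
    exact ⟨Real.logb c₂ c₁, c₁, by linarith,
      fun t ht a ha => hF.le_mul_rpow_logb_mul_of_doubling hc₁.le hc₂ h ht ha⟩
  · rintro ⟨q, c, -, h⟩
    refine ⟨max (c * 2 ^ q) 2, 2, one_lt_two.trans_le (le_max_right _ _), one_lt_two,
      fun s hs => ?_⟩
    exact (h s hs 2 one_lt_two).trans
      (mul_le_mul_of_nonneg_right (le_max_left _ _) (hF.nonneg_s1 hs))

end
end
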